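/- Let G be a graph on n vertices and let k ≥ 2 and r be integers. Suppose that for every partition of V(G) into k parts U_1, …, U_k, the number of paths u_1, …, u_k with u_i ∈ U_i for all i is at most r. Then the number of (unlabeled) copies of the path P_{k-1} (the path with k-1 edges, i.e., k vertices) in G is at most (1/2)·k^k·r. -/

import Mathlib

open SimpleGraph

/-- Number of unlabeled copies of `H` in `G`, i.e. the number of subgraphs of `G`
whose coercion is isomorphic to `H`. -/
noncomputable def copyCount {α β : Type*} (H : SimpleGraph α) (G : SimpleGraph β) : ℕ :=
  Nat.card {G' : G.Subgraph // Nonempty (H ≃g G'.coe)}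

/-- `G` contains no cycle of length `m`. -/
def CycleFree {V : Type*} (G : SimpleGraph V) (m : ℕ) : Prop :=
  ∀ ⦃v : V⦄ (w : G.Walk v v), w.IsCycle → w.length ≠ m

/-- The number of `(U 0, …, U (k-1))`-cycles in `G`. -/
noncomputable def cCount {V : Type*} (G : SimpleGraph V) {k : ℕ} (U : Fin k → Set V) : ℕ :=
  Nat.card {u : Fin k → V // (∀ i, u i ∈ U i) ∧ ∀ i : Fin k, G.Adj (u i) (u ⟨(i.val + 1) % k, Nat.mod_lt _ i.pos⟩)}

/-- The number of `(U 0, …, U (k-1))`-paths in `G`. -/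
noncomputable def pCount {V : Type*} (G : SimpleGraph V) {k : ℕ} (U : Fin k → Set V) : ℕ :=
  Nat.card {u : Fin k → V // (∀ i, u i ∈ U i) ∧
    ∀ (i : ℕ) (h : i + 1 < k), G.Adj (u ⟨i, Nat.lt_of_succ_lt h⟩) (u ⟨i + 1, h⟩)}

/-- The number of edges of `G` between the disjoint sets `X` and `Y`. -/
noncomputable def eCount {V : Type*} (G : SimpleGraph V) (X Y : Set V) : ℕ :=
  Nat.card {p : V × V // p.1 ∈ X ∧ p.2 ∈ Y ∧ G.Adj p.1 p.2}

/-- The neighbourhood of `v` inside the set `Y`. -/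
def nbhdIn {V : Type*} (G : SimpleGraph V) (v : V) (Y : Set V) : Set V :=
  {y ∈ Y | G.Adj v y}

/-- The independence number of a finite graph. -/
noncomputable def indepNum {W : Type*} [Fintype W] (G : SimpleGraph W) : ℕ :=
  sSup {m | ∃ s : Finset W, (∀ a ∈ s, ∀ b ∈ s, ¬ G.Adj a b) ∧ s.card = m}


/-!
A copy of `P_{k-1}` yields at least two labelled copies `c : Fin k → V` (it has the reversal
automorphism). Double count the pairs `(f, c)` of a colouring `f : V → Fin k` and a labelled copy
`c` with `f ∘ c = id`: for fixed `f`, such `c` are `(f⁻¹ 0, …, f⁻¹ (k-1))`-paths, so there are at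
most `r` of them; for fixed `c`, exactly `k ^ (n - k)` colourings qualify, since only the colours
of the `k` vertices of `c` are prescribed. Hence (#labelled copies) · `k ^ (n - k) ≤ k ^ n · r`.
-/

open Function Finset

lemma Function.Injective.card_leftInverse {ι V : Type*} [Fintype ι] [Fintype V] {u : ι → V}
    (hu : Injective u) :
    Nat.card {f : V → ι // LeftInverse f u} =
      Fintype.card ι ^ (Fintype.card V - Fintype.card ι) := by
  classical
  let t : V → Finset ι := fun v => {i | ∀ j, u j = v → i = j}
  have hmem (f : V → ι) : f ∈ Fintype.piFinset t ↔ LeftInverse f u := by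
    simp only [Fintype.mem_piFinset, t, mem_filter_univ]
    exact ⟨fun h j => h _ j rfl, fun h v j hj => hj ▸ h j⟩
  have hcard (v : V) : #(t v) = if v ∈ Set.range u then 1 else Fintype.card ι := by
    split_ifs with hv
    · obtain ⟨i, rfl⟩ := hv
      exact card_eq_one.mpr ⟨i, by ext; simp [t, hu.eq_iff, eq_comm]⟩
    · rw [← card_univ]
      congr 1
      ext i
      simp only [t, mem_filter_univ, mem_univ, iff_true]
      exact fun j hj => absurd ⟨j, hj⟩ hv
  rw [← Nat.card_congr (Equiv.subtypeEquivRight hmem), Nat.card_eq_fintype_card,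
    Fintype.card_coe, Fintype.card_piFinset]
  simp_rw [hcard]
  rw [prod_ite, prod_const_one, one_mul, prod_const, ← Fintype.card_subtype,
    Fintype.card_subtype_compl, Set.card_range_of_injective hu]

namespace SimpleGraph

variable {α β : Type*} {A : SimpleGraph α} {B : SimpleGraph β}

instance [Finite α] [Finite β] : Finite (Copy A B) :=
  Finite.of_injective _ DFunLike.coe_injective

instance [Finite α] [Finite β] : Finite (A ≃g B) :=
  Finite.of_injective _ RelIso.toEquiv_injective

lemma Copy.toSubgraph_coeCopy_comp (B' : B.Subgraph) (e : A ≃g B'.coe) :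
    (B'.coeCopy.comp e.toCopy).toSubgraph = B' := by
  simp [Copy.toSubgraph, Subgraph.coeCopy, Copy.comp, Subgraph.map_comp]

theorem card_iso_mul_copyCount_le [Finite α] [Finite β] :
    Nat.card (A ≃g A) * _root_.copyCount A B ≤ Nat.card (Copy A B) := by
  let Φ : {B' : B.Subgraph // Nonempty (A ≃g B'.coe)} × (A ≃g A) → Copy A B :=
    fun p => p.1.1.coeCopy.comp (p.1.2.some.comp p.2).toCopy
  have hΦ : Function.Injective Φ := by
    rintro ⟨⟨B₁, h₁⟩, a₁⟩ ⟨⟨B₂, h₂⟩, a₂⟩ hΦ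
    obtain rfl : B₁ = B₂ := by
      rw [← Copy.toSubgraph_coeCopy_comp B₁ (h₁.some.comp a₁),
        ← Copy.toSubgraph_coeCopy_comp B₂ (h₂.some.comp a₂)]
      exact congrArg Copy.toSubgraph hΦ
    refine Prod.ext rfl (RelIso.ext fun x => ?_)
    exact h₁.some.injective (Subtype.ext (DFunLike.congr_fun hΦ x))
  simpa [_root_.copyCount, Nat.card_prod, mul_comm] using Nat.card_le_card_of_injective Φ hΦ

def pathGraph.reverse (k : ℕ) : pathGraph k ≃g pathGraph k where
  toEquiv := Fin.revPerm
  map_rel_iff' := by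
    intro i j
    simp only [Fin.revPerm_apply, pathGraph_adj, Fin.val_rev]
    omega

lemma two_le_card_pathGraph_iso {k : ℕ} (hk : 2 ≤ k) :
    2 ≤ Nat.card (pathGraph k ≃g pathGraph k) := by
  have hrev : pathGraph.reverse k ≠ .refl := by
    intro h
    have := congrArg (fun e : pathGraph k ≃g pathGraph k => (e ⟨0, by omega⟩ : ℕ)) h
    simp only [pathGraph.reverse, RelIso.coe_fn_mk, Fin.revPerm_apply, Fin.val_rev, zero_add,
      RelIso.refl_apply] at this
    omega
  have : Nontrivial (pathGraph k ≃g pathGraph k) := ⟨_, _, hrev⟩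
  exact Finite.one_lt_card_iff_nontrivial.mpr this

end SimpleGraph

section PathCount

variable {V : Type*} (G : SimpleGraph V) {k : ℕ}

lemma card_copy_pathGraph_leftInverse_le [Finite V] (f : V → Fin k) :
    Nat.card {c : Copy (pathGraph k) G // LeftInverse f c} ≤ pCount G (fun i => f ⁻¹' {i}) :=
  Nat.card_le_card_of_injective
    (fun c => ⟨c.1, c.2, fun _ _ => c.1.toHom.map_adj (pathGraph_adj.mpr (.inl rfl))⟩)
    (fun _ _ h => Subtype.ext (DFunLike.coe_injective (congrArg Subtype.val h)))

theorem card_copy_pathGraph_le [Fintype V] (hk : 0 < k) {r : ℕ}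
    (h : ∀ f : V → Fin k, pCount G (fun i => f ⁻¹' {i}) ≤ r) :
    Nat.card (Copy (pathGraph k) G) ≤ k ^ k * r := by
  classical
  set n := Fintype.card V
  have hdouble : Nat.card (Copy (pathGraph k) G) * k ^ (n - k) ≤ k ^ n * r := by
    have := card_mul_le_card_mul (fun (c : Copy (pathGraph k) G) (f : V → Fin k) => LeftInverse f c)
      (s := univ) (t := univ) (m := k ^ (n - k)) (n := r) ?_ ?_
    · simpa [Nat.card_eq_fintype_card] using this
    · intro c _
      rw [bipartiteAbove, ← Fintype.card_subtype, ← Nat.card_eq_fintype_card,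
        (show Injective c from c.injective).card_leftInverse, Fintype.card_fin]
    · intro f _
      rw [bipartiteBelow, ← Fintype.card_subtype, ← Nat.card_eq_fintype_card]
      exact (card_copy_pathGraph_leftInverse_le G f).trans (h f)
  rcases isEmpty_or_nonempty (Copy (pathGraph k) G) with _ | ⟨⟨c⟩⟩
  · simp
  have hkn : k ≤ n := by simpa using Fintype.card_le_of_injective c c.injective
  refine le_of_mul_le_mul_right (hdouble.trans_eq ?_) (pow_pos hk (n - k))
  rw [← pow_sub_mul_pow k hkn]
  ring

end PathCount

theorem stmt1 {V : Type*} [Fintype V] (G : SimpleGraph V) (k r : ℕ) (hk : 2 ≤ k)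
    (h : ∀ U : Fin k → Set V,
      (∀ i j, i ≠ j → Disjoint (U i) (U j)) → (⋃ i, U i) = Set.univ →
      pCount G U ≤ r) :
    2 * _root_.copyCount (pathGraph k) G ≤ k ^ k * r := by
  have hfibers (f : V → Fin k) : pCount G (fun i => f ⁻¹' {i}) ≤ r :=
    h _ (fun _ _ hij => (Set.disjoint_singleton.mpr hij).preimage f) (by ext; simp)
  calc 2 * _root_.copyCount (pathGraph k) G
      ≤ Nat.card (pathGraph k ≃g pathGraph k) * _root_.copyCount (pathGraph k) G :=
        Nat.mul_le_mul_right _ (two_le_card_pathGraph_iso hk)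
    _ ≤ Nat.card (Copy (pathGraph k) G) := card_iso_mul_copyCount_le
    _ ≤ k ^ k * r := card_copy_pathGraph_le G (by omega) hfibers
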